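/- Let f(x) = -x + b₀x^σ + ... + b_{t-1}x^{σq^{n(t-1)}} with σ a generator of Gal(F_{q^n}/F_q), and let G(x) = Σ_{i=0}^{t-1} b_i x^{q^{ni}}. Then dim_{F_q} ker f ≤ t - dim_{F_{q^n}} ker G. -/

import Mathlib

/-!
Put `g = G ∘ σ`. The kernel of `f` is the set of fixed points of `g`, so it lies in the image
of `G`. The map `g` is `σ'`-semilinear over `F_{q^n}`, and the fixed field of the generator `σ'`
is `F_q`; a shortest-relation argument then shows that `F_q`-independent fixed points of `g` stay
`F_{q^n}`-independent. Hence `dim_{F_q} ker f ≤ rank G = t - dim_{F_{q^n}} ker G`.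
-/

open Module

theorem Module.finrank_eq_of_card_eq_pow {K V : Type*} [Field K] [Fintype K] [AddCommGroup V]
    [Module K V] [Fintype V] {q m : ℕ} (hK : Fintype.card K = q) (hV : Fintype.card V = q ^ m) :
    finrank K V = m := by
  refine Nat.pow_right_injective (hK ▸ Fintype.one_lt_card (α := K)) ?_
  show q ^ finrank K V = q ^ m
  rw [← hV, ← hK, card_eq_pow_finrank (K := K) (V := V)]

theorem AlgEquiv.mem_range_algebraMap_of_apply_eq_self {K L : Type*} [Field K] [Field L]
    [Algebra K L] [FiniteDimensional K L] [IsGalois K L] {σ : Gal(L/K)}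
    (hσ : orderOf σ = finrank K L) {x : L} (hx : σ x = x) : x ∈ Set.range (algebraMap K L) := by
  have hgen : Subgroup.zpowers σ = ⊤ := by
    refine Subgroup.eq_top_of_card_eq _ ?_
    rw [Nat.card_zpowers, hσ, IsGalois.card_aut_eq_finrank]
  have hstab : Subgroup.zpowers σ ≤ MulAction.stabilizer Gal(L/K) x :=
    Subgroup.zpowers_le.mpr hx
  exact (IsGalois.mem_range_algebraMap_iff_fixed x).mpr fun τ => hstab (hgen ▸ Subgroup.mem_top τ)

section SemilinearFixedPoints

variable {K L V ι : Type*} [Field K] [Field L] [Algebra K L] [AddCommGroup V] [Module L V]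
  [Module K V] [IsScalarTower K L V] {σ : L →+* L} (g : V →ₛₗ[σ] V) {v : ι → V}

theorem sum_map_smul_eq_zero_of_fixed (hv : ∀ i, g (v i) = v i) {s : Finset ι} {c : ι → L}
    (hc : ∑ j ∈ s, c j • v j = 0) : ∑ j ∈ s, σ (c j) • v j = 0 := by
  simpa only [map_sum, map_smulₛₗ, hv, map_zero] using congrArg g hc

theorem eq_zero_of_sum_smul_eq_zero_of_map_eq (hσ : ∀ c, σ c = c → c ∈ Set.range (algebraMap K L))
    (hli : LinearIndependent K v) {s : Finset ι} {c : ι → L} (hc : ∑ j ∈ s, c j • v j = 0)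
    (hfix : ∀ j ∈ s, σ (c j) = c j) : ∀ j ∈ s, c j = 0 := by
  classical
  choose a ha using fun j : s => hσ (c j) (hfix j j.2)
  let a' : ι → K := fun j => if h : j ∈ s then a ⟨j, h⟩ else 0
  have ha' : ∀ j ∈ s, algebraMap K L (a' j) = c j := fun j hj => by simp [a', hj, ha]
  have hrel : ∑ j ∈ s, a' j • v j = 0 := by
    rw [← hc]
    exact Finset.sum_congr rfl fun j hj => by rw [← algebraMap_smul L, ha' j hj]
  intro j hj
  rw [← ha' j hj, linearIndependent_iff'.mp hli s a' hrel j hj, map_zero]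

theorem LinearIndependent.of_semilinear_fixed
    (hσ : ∀ c, σ c = c → c ∈ Set.range (algebraMap K L))
    (hv : ∀ i, g (v i) = v i) (hli : LinearIndependent K v) : LinearIndependent L v := by
  classical
  rw [linearIndependent_iff']
  intro s
  induction s using Finset.strongInduction with
  | _ s ih =>
  intro c hc i hi
  by_contra hci
  -- Normalise to `c' i = 1`: then `σ c' - c'` is a relation supported on `s.erase i`.
  set c' : ι → L := fun j => (c i)⁻¹ * c j
  have hc'i : c' i = 1 := inv_mul_cancel₀ hci
  have hc' : ∑ j ∈ s, c' j • v j = 0 := by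
    simp only [c', mul_smul, ← Finset.smul_sum, hc, smul_zero]
  have hdiff : ∑ j ∈ s.erase i, (σ (c' j) - c' j) • v j = 0 := by
    rw [Finset.sum_erase s (by rw [hc'i, map_one, sub_self, zero_smul])]
    simp only [sub_smul, Finset.sum_sub_distrib, hc', sum_map_smul_eq_zero_of_fixed g hv hc',
      sub_zero]
  have hfix : ∀ j ∈ s, σ (c' j) = c' j := by
    intro j hj
    rcases eq_or_ne j i with rfl | hji
    · rw [hc'i, map_one]
    · exact sub_eq_zero.mp
        (ih _ (Finset.erase_ssubset hi) _ hdiff j (Finset.mem_erase.mpr ⟨hji, hj⟩))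
  have hc'i_zero := eq_zero_of_sum_smul_eq_zero_of_map_eq hσ hli hc' hfix i hi
  exact one_ne_zero (hc'i ▸ hc'i_zero)

theorem finrank_le_of_semilinear_fixed (hσ : ∀ c, σ c = c → c ∈ Set.range (algebraMap K L))
    (U : Submodule K V) [FiniteDimensional K U] (W : Submodule L V) [FiniteDimensional L W]
    (hU : ∀ x ∈ U, g x = x) (hUW : (U : Set V) ⊆ W) : finrank K U ≤ finrank L W := by
  let B := Module.finBasis K U
  have hli : LinearIndependent L (fun i => (B i : V)) :=
    (B.linearIndependent.map' U.subtype U.ker_subtype).of_semilinear_fixed g hσ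
      fun i => hU _ (B i).2
  calc finrank K U = finrank L (Submodule.span L (Set.range fun i => (B i : V))) := by
        rw [finrank_span_eq_card hli, Fintype.card_fin]
    _ ≤ finrank L W := by
        refine Submodule.finrank_mono (Submodule.span_le.mpr ?_)
        rintro _ ⟨i, rfl⟩
        exact hUW (B i).2

end SemilinearFixedPoints

theorem stmt_12_general (q n t : ℕ) (Fq Fqn F : Type*) [Field Fq] [Field Fqn] [Field F]
    [Algebra Fq Fqn] [Algebra Fqn F] [Algebra Fq F] [IsScalarTower Fq Fqn F]
    [Fintype Fq] [Fintype Fqn] [Fintype F]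
    (hq : Fintype.card Fq = q) (hqn : Fintype.card Fqn = q ^ n)
    (hF : Fintype.card F = q ^ (n * t))
    (σ : F ≃ₐ[Fq] F) (σ' : Fqn ≃ₐ[Fq] Fqn) (hord : orderOf σ' = n)
    (hres : ∀ c : Fqn, σ (algebraMap Fqn F c) = algebraMap Fqn F (σ' c))
    (G : F →ₗ[Fqn] F)
    (f : F →ₗ[Fq] F)
    (hf : ∀ x, f x = -x + G (σ x)) :
    Module.finrank Fq (LinearMap.ker f) ≤ t - Module.finrank Fqn (LinearMap.ker G) := by
  have hn : finrank Fq Fqn = n := finrank_eq_of_card_eq_pow (V := Fqn) hq hqn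
  have ht : finrank Fqn F = t := finrank_eq_of_card_eq_pow (V := F) hqn (by rw [hF, pow_mul])
  let σₛ : F →ₛₗ[(σ' : Fqn →+* Fqn)] F :=
    { toFun := σ
      map_add' := map_add σ
      map_smul' := fun c x => by simp only [Algebra.smul_def, map_mul, hres]; rfl }
  have hfixed : ∀ x ∈ LinearMap.ker f, G.comp σₛ x = x := fun x hx => by
    rw [LinearMap.mem_ker, hf] at hx
    change G (σ x) = x
    linear_combination hx
  have hrank := finrank_le_of_semilinear_fixed (G.comp σₛ)
    (fun _ => σ'.mem_range_algebraMap_of_apply_eq_self (hord.trans hn.symm)) (LinearMap.ker f)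
    (LinearMap.range G) hfixed (fun x hx => ⟨σ x, hfixed x hx⟩)
  have := LinearMap.finrank_range_add_finrank_ker G
  omega

theorem stmt_12 (q n t : ℕ) (Fq Fqn F : Type*) [Field Fq] [Field Fqn] [Field F]
    [Algebra Fq Fqn] [Algebra Fqn F] [Algebra Fq F] [IsScalarTower Fq Fqn F]
    [Fintype Fq] [Fintype Fqn] [Fintype F]
    (hq : Fintype.card Fq = q) (hqn : Fintype.card Fqn = q ^ n)
    (hF : Fintype.card F = q ^ (n * t))
    (σ : F ≃ₐ[Fq] F) (σ' : Fqn ≃ₐ[Fq] Fqn) (hord : orderOf σ' = n)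
    (hres : ∀ c : Fqn, σ (algebraMap Fqn F c) = algebraMap Fqn F (σ' c))
    (b : Fin t → F)
    (G : F →ₗ[Fqn] F)
    (hG : ∀ x, G x = ∑ i : Fin t, b i * x ^ q ^ (n * (i : ℕ)))
    (f : F →ₗ[Fq] F)
    (hf : ∀ x, f x = -x + G (σ x)) :
    Module.finrank Fq (LinearMap.ker f) ≤ t - Module.finrank Fqn (LinearMap.ker G) :=
  stmt_12_general q n t Fq Fqn F hq hqn hF σ σ' hord hres G f hf
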